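/- Let n ≥ 1, let p ∈ ℂ[s] be a nonzero polynomial of degree N_p with leading coefficient p_{N_p}, and let N_q ∈ ℕ be such that p and s^{N_q} are coprime (i.e. N_q = 0 or p(0) ≠ 0). Let S ∈ Mₙ(ℂ)((x)) be invertible in Mₙ(ℂ)((x)), with pairwise commuting coefficients, satisfying S^{N_q}·(dS/dx) = p(S). Assume there exists a nonzero f ∈ ℂ((x)) of negative order such that every coefficient of S − f·1ₙ is a nilpotent matrix. Then N_p = N_q + 2, the order of f equals −1, and the leading coefficient of f equals −1/p_{N_p}. -/

import Mathlib

/-!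
The coefficients of `S` generate a commutative finite-dimensional subalgebra `A` of `Mₙ(ℂ)`.
Lifting `S` to `A((x))` and applying a character `χ : A →ₐ[ℂ] ℂ`, which kills nilpotents, turns `S`
into `f`; hence `f` solves the scalar equation `f ^ N_q * f' = p(f)`. If `d = ord f < 0` and `c` is
the leading coefficient of `f`, the left side has order `N_q d + d - 1` and leading coefficient
`d c ^ (N_q + 1)`, while on the right the top-degree term of `p` dominates, giving order `N_p d` and
leading coefficient `p_{N_p} c ^ N_p`. So `d (N_q + 1 - N_p) = 1`, forcing `d = -1` and
`N_p = N_q + 2`, and then `-c ^ (N_q + 1) = p_{N_p} c ^ (N_q + 2)` gives `c = -1 / p_{N_p}`.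
-/

/-- Formal derivative of a Laurent series. -/
noncomputable def lsDeriv {A : Type*} [Ring A] (f : LaurentSeries A) : LaurentSeries A where
  coeff k := (k + 1) • f.coeff (k + 1)
  isPWO_support' := by
    refine (f.isPWO_support.image_of_monotone
      (f := fun m : ℤ => m - 1) (fun a b h => by simpa using h)).mono ?_
    intro k hk
    have hk' : f.coeff (k + 1) ≠ 0 := by
      intro h
      simp [Function.mem_support, h] at hk
    exact ⟨k + 1, hk', by ring⟩

namespace HahnSeries

theorem exists_map_eq_of_coeff_mem {Γ k R : Type*} [PartialOrder Γ] [CommSemiring k] [Semiring R]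
    [Algebra k R] {A : Subalgebra k R} {x : HahnSeries Γ R} (hx : ∀ i, x.coeff i ∈ A) :
    ∃ y : HahnSeries Γ A, y.map A.val = x :=
  ⟨{ coeff i := ⟨x.coeff i, hx i⟩
     isPWO_support' := x.isPWO_support.mono fun _ hi h ↦ hi (Subtype.ext h) }, rfl⟩

section MapAlgHom

variable {Γ : Type*} [AddCommMonoid Γ] [PartialOrder Γ] [IsOrderedCancelAddMonoid Γ]
  {k R S : Type*} [CommSemiring k] [Semiring R] [Semiring S] [Algebra k R] [Algebra k S]

noncomputable def mapAlgHom (φ : R →ₐ[k] S) : HahnSeries Γ R →ₐ[k] HahnSeries Γ S where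
  toFun x := x.map φ
  map_one' := HahnSeries.map_one (φ : R →+* S).toMonoidWithZeroHom
  map_mul' _ _ := HahnSeries.map_mul (φ : R →ₙ+* S)
  map_zero' := by ext; simp
  map_add' _ _ := HahnSeries.map_add (φ : R →+ S)
  commutes' c := by ext; simp [algebraMap_apply, coeff_single, apply_ite φ]

theorem mapAlgHom_apply (φ : R →ₐ[k] S) (x : HahnSeries Γ R) : mapAlgHom φ x = x.map φ := rfl

theorem mapAlgHom_injective {φ : R →ₐ[k] S} (hφ : Function.Injective φ) :
    Function.Injective (mapAlgHom (Γ := Γ) φ) :=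
  fun _ _ h ↦ HahnSeries.ext <| funext fun i ↦ hφ congr(($h).coeff i)

end MapAlgHom

variable {Γ R : Type*} [LinearOrder Γ]

theorem ne_zero_of_order_ne_zero [Zero Γ] [Zero R] {x : HahnSeries Γ R} (h : x.order ≠ 0) :
    x ≠ 0 :=
  fun hx ↦ h (hx ▸ order_zero)

theorem order_eq_of_orderTop_eq [Zero Γ] [Zero R] {x : HahnSeries Γ R} {g : Γ}
    (h : x.orderTop = g) : x.order = g :=
  WithTop.coe_injective <|
    (order_eq_orderTop_of_ne_zero (orderTop_ne_top.1 (h ▸ WithTop.coe_ne_top))).trans h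

theorem leadingCoeff_pow [AddCommMonoid Γ] [IsOrderedCancelAddMonoid Γ] [Semiring R]
    [NoZeroDivisors R] (x : HahnSeries Γ R) (n : ℕ) :
    (x ^ n).leadingCoeff = x.leadingCoeff ^ n := by
  induction n with
  | zero => simp
  | succ n ih => rw [pow_succ, leadingCoeff_mul, ih, pow_succ]

end HahnSeries

open HahnSeries Polynomial

theorem IsAlgClosed.nonempty_algHom {k A : Type*} [Field k] [IsAlgClosed k] [CommRing A]
    [Nontrivial A] [Algebra k A] [Algebra.IsIntegral k A] : Nonempty (A →ₐ[k] k) := by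
  obtain ⟨m, hm⟩ := Ideal.exists_maximal A
  let _ : Field (A ⧸ m) := Ideal.Quotient.field m
  let e : k ≃ₐ[k] A ⧸ m :=
    AlgEquiv.ofBijective (Algebra.ofId k _) IsAlgClosed.algebraMap_bijective_of_isIntegral
  exact ⟨e.symm.toAlgHom.comp (Ideal.Quotient.mkₐ k m)⟩

section Transfer

variable {k R S : Type*} [CommRing k] [Ring R] [Ring S] [Algebra k R] [Algebra k S]
  {N : ℕ} {p : k[X]} {T : LaurentSeries R}

theorem lsDeriv_mapAlgHom (φ : R →ₐ[k] S) (x : LaurentSeries R) :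
    lsDeriv (mapAlgHom φ x) = mapAlgHom φ (lsDeriv x) := by
  ext; exact (map_zsmul φ _ _).symm

theorem pow_mul_lsDeriv_mapAlgHom (φ : R →ₐ[k] S) (h : T ^ N * lsDeriv T = aeval T p) :
    mapAlgHom φ T ^ N * lsDeriv (mapAlgHom φ T) = aeval (mapAlgHom φ T) p := by
  rw [lsDeriv_mapAlgHom, ← map_pow, ← map_mul, h, aeval_algHom_apply]

theorem pow_mul_lsDeriv_of_mapAlgHom {φ : R →ₐ[k] S} (hφ : Function.Injective φ)
    (h : mapAlgHom φ T ^ N * lsDeriv (mapAlgHom φ T) = aeval (mapAlgHom φ T) p) :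
    T ^ N * lsDeriv T = aeval T p := by
  apply mapAlgHom_injective (Γ := ℤ) hφ
  rwa [map_mul, map_pow, ← lsDeriv_mapAlgHom, ← aeval_algHom_apply]

end Transfer

open scoped IsMulCommutative in
theorem exists_character_mapAlgHom_eq_of_isNilpotent_sub {k M : Type*} [Field k] [IsAlgClosed k]
    [Ring M] [Nontrivial M] [Algebra k M] [FiniteDimensional k M] {S : LaurentSeries M}
    (hcomm : ∀ i j, Commute (S.coeff i) (S.coeff j)) {f : LaurentSeries k}
    (hnil : ∀ i, IsNilpotent (S.coeff i - f.coeff i • (1 : M))) :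
    ∃ (A : Subalgebra k M) (T : LaurentSeries A) (χ : A →ₐ[k] k),
      mapAlgHom A.val T = S ∧ mapAlgHom χ T = f := by
  let A := Algebra.adjoin k (Set.range S.coeff)
  have : IsMulCommutative A := Algebra.isMulCommutative_adjoin k <| by
    rintro _ ⟨i, rfl⟩ _ ⟨j, rfl⟩
    exact hcomm i j
  obtain ⟨T, hT⟩ := exists_map_eq_of_coeff_mem (A := A) (x := S)
    fun i ↦ Algebra.subset_adjoin ⟨i, rfl⟩
  obtain ⟨χ⟩ := IsAlgClosed.nonempty_algHom (k := k) (A := A)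
  refine ⟨A, T, χ, hT, HahnSeries.ext <| funext fun i ↦ ?_⟩
  have hTi : IsNilpotent (T.coeff i - algebraMap k A (f.coeff i)) := by
    rw [← IsNilpotent.map_iff (f := A.val) Subtype.val_injective, map_sub, AlgHom.commutes,
      Algebra.algebraMap_eq_smul_one]
    simpa [← hT, mapAlgHom_apply] using hnil i
  show χ (T.coeff i) = f.coeff i
  simpa [sub_eq_zero] using (hTi.map χ).eq_zero

theorem lsDeriv_coeff {R : Type*} [Ring R] (f : LaurentSeries R) (k : ℤ) :
    (lsDeriv f).coeff k = (k + 1) • f.coeff (k + 1) := rfl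

theorem lsDeriv_coeff_order_sub_one {R : Type*} [Ring R] (f : LaurentSeries R) :
    (lsDeriv f).coeff (f.order - 1) = f.order • f.leadingCoeff := by
  rw [lsDeriv_coeff, sub_add_cancel, leadingCoeff_eq]

section Deriv

variable {R : Type*} [Ring R] [IsAddTorsionFree R] {f : LaurentSeries R}

theorem lsDeriv_coeff_order_sub_one_ne_zero (h : f.order ≠ 0) :
    (lsDeriv f).coeff (f.order - 1) ≠ 0 := by
  rw [lsDeriv_coeff_order_sub_one]
  exact smul_ne_zero h (leadingCoeff_ne_zero.2 (ne_zero_of_order_ne_zero h))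

theorem order_lsDeriv (h : f.order ≠ 0) : (lsDeriv f).order = f.order - 1 := by
  have hne := lsDeriv_coeff_order_sub_one_ne_zero h
  refine le_antisymm (order_le_of_coeff_ne_zero hne) ?_
  have hlead : (lsDeriv f).coeff (lsDeriv f).order ≠ 0 :=
    mt coeff_order_eq_zero.1 (ne_zero_of_coeff_ne_zero hne)
  rw [lsDeriv_coeff] at hlead
  linarith [order_le_of_coeff_ne_zero (right_ne_zero_of_smul hlead)]

theorem leadingCoeff_lsDeriv (h : f.order ≠ 0) :
    (lsDeriv f).leadingCoeff = f.order • f.leadingCoeff := by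
  rw [leadingCoeff_eq, order_lsDeriv h, lsDeriv_coeff_order_sub_one]

end Deriv

theorem order_and_leadingCoeff_pow_mul_lsDeriv {R : Type*} [CommRing R] [IsDomain R]
    [IsAddTorsionFree R] {f : LaurentSeries R} (hf : f.order ≠ 0) (N : ℕ) :
    (f ^ N * lsDeriv f).order = N • f.order + (f.order - 1) ∧
      (f ^ N * lsDeriv f).leadingCoeff = f.leadingCoeff ^ N * (f.order • f.leadingCoeff) := by
  have hd0 : lsDeriv f ≠ 0 := ne_zero_of_coeff_ne_zero (lsDeriv_coeff_order_sub_one_ne_zero hf)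
  rw [order_mul (pow_ne_zero N (ne_zero_of_order_ne_zero hf)) hd0, order_pow, order_lsDeriv hf,
    HahnSeries.leadingCoeff_mul, HahnSeries.leadingCoeff_pow, leadingCoeff_lsDeriv hf]
  exact ⟨rfl, rfl⟩

section Aeval

variable {Γ R : Type*} [AddCommGroup Γ] [LinearOrder Γ] [IsOrderedAddMonoid Γ]
  [CommRing R] [IsDomain R] {f : HahnSeries Γ R}

theorem lt_orderTop_aeval_of_degree_lt (hf : f.order < 0) {q : R[X]} {n : ℕ}
    (hq : q.degree < n) : ((n • f.order : Γ) : WithTop Γ) < (aeval f q).orderTop := by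
  rcases eq_or_ne q 0 with rfl | hq0
  · rw [map_zero, orderTop_zero]
    exact WithTop.coe_lt_top _
  rw [aeval_eq_sum_range' ((natDegree_lt_iff_degree_lt hq0).2 hq), ← addVal_apply]
  refine AddValuation.map_lt_sum _ WithTop.coe_ne_top fun i hi ↦ ?_
  rw [addVal_apply]
  calc ((n • f.order : Γ) : WithTop Γ) < (i • f.order : Γ) := by
        rw [WithTop.coe_lt_coe, ← neg_lt_neg_iff, ← smul_neg, ← smul_neg]
        exact nsmul_lt_nsmul_left (neg_pos.2 hf) (Finset.mem_range.1 hi)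
    _ = (f ^ i).orderTop := by
        rw [← order_pow, order_eq_orderTop_of_ne_zero
          (pow_ne_zero _ (ne_zero_of_order_ne_zero hf.ne))]
    _ ≤ _ := orderTop_le_orderTop_smul (q.coeff i) (f ^ i)

theorem order_and_leadingCoeff_aeval_of_order_neg (hf : f.order < 0) (p : R[X]) :
    (aeval f p).order = p.natDegree • f.order ∧
      (aeval f p).leadingCoeff = p.leadingCoeff * f.leadingCoeff ^ p.natDegree := by
  rcases eq_or_ne p 0 with rfl | hp
  · simp
  set top := HahnSeries.C p.leadingCoeff * f ^ p.natDegree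
  have hsplit : aeval f p = top + aeval f p.eraseLead := by
    conv_lhs => rw [← p.eraseLead_add_C_mul_X_pow]
    rw [map_add, add_comm, map_mul, aeval_C, map_pow, aeval_X, HahnSeries.algebraMap_apply,
      Algebra.algebraMap_self_apply]
  have htop : top.orderTop = ((p.natDegree • f.order : Γ) : WithTop Γ) := by
    rw [orderTop_mul, C_apply, orderTop_single (leadingCoeff_ne_zero.2 hp), WithTop.coe_zero,
      zero_add, ← order_pow,
      order_eq_orderTop_of_ne_zero (pow_ne_zero _ (ne_zero_of_order_ne_zero hf.ne))]
  have hlt : top.orderTop < (aeval f p.eraseLead).orderTop :=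
    htop ▸ lt_orderTop_aeval_of_degree_lt hf
      ((degree_eraseLead_lt hp).trans_eq (degree_eq_natDegree hp))
  rw [hsplit, leadingCoeff_add_eq_left hlt, HahnSeries.leadingCoeff_mul,
    HahnSeries.leadingCoeff_pow, C_apply, leadingCoeff_of_single]
  exact ⟨order_eq_of_orderTop_eq ((orderTop_add_eq_left hlt).trans htop), rfl⟩

end Aeval

theorem eq_neg_one_and_eq_add_two_of_nsmul_add_sub_one_eq {d : ℤ} {a b : ℕ} (hd : d < 0)
    (h : a • d + (d - 1) = b • d) : d = -1 ∧ b = a + 2 := by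
  have hmul : d * ((a : ℤ) + 1 - b) = 1 := by
    simp only [nsmul_eq_mul] at h
    linarith
  rcases Int.eq_one_or_neg_one_of_mul_eq_one hmul with rfl | rfl <;> omega

theorem eq_neg_inv_of_pow_mul_neg_eq {K : Type*} [Field K] {c l : K} {a : ℕ} (hc : c ≠ 0)
    (h : c ^ a * -c = l * c ^ (a + 2)) : c = -l⁻¹ := by
  have hlc : -c * l = 1 :=
    mul_right_cancel₀ (pow_ne_zero (a + 1) hc) (by linear_combination h)
  exact neg_eq_iff_eq_neg.1 (eq_inv_of_mul_eq_one_left hlc)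

theorem stmt_6_general (n : ℕ) (hn : 0 < n) (p : Polynomial ℂ) (N_q : ℕ)
    (S : LaurentSeries (Matrix (Fin n) (Fin n) ℂ))
    (hcomm : ∀ i j : ℤ, Commute (S.coeff i) (S.coeff j))
    (hode : S ^ N_q * lsDeriv S = Polynomial.aeval S p)
    (f : LaurentSeries ℂ) (hord : f.order < 0)
    (hnil : ∀ k : ℤ, IsNilpotent (S.coeff k - f.coeff k • (1 : Matrix (Fin n) (Fin n) ℂ))) :
    p.natDegree = N_q + 2 ∧ f.order = -1 ∧ f.coeff (-1) = -(p.leadingCoeff)⁻¹ := by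
  have : Nonempty (Fin n) := ⟨⟨0, hn⟩⟩
  obtain ⟨A, T, χ, hTS, hTf⟩ := exists_character_mapAlgHom_eq_of_isNilpotent_sub hcomm hnil
  -- `hode_f` is left untyped: `aeval f p` written out would pick `HahnSeries.powerSeriesAlgebra`,
  -- which does not unify with the `HahnSeries.instAlgebra` structure the lemmas below use.
  have hode_f :=
    pow_mul_lsDeriv_mapAlgHom χ (pow_mul_lsDeriv_of_mapAlgHom Subtype.val_injective (hTS ▸ hode))
  rw [hTf] at hode_f
  obtain ⟨hordL, hleadL⟩ := order_and_leadingCoeff_pow_mul_lsDeriv hord.ne N_q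
  obtain ⟨hordR, hleadR⟩ := order_and_leadingCoeff_aeval_of_order_neg hord p
  obtain ⟨hd, hdeg⟩ :=
    eq_neg_one_and_eq_add_two_of_nsmul_add_sub_one_eq hord (hordL.symm.trans (hode_f ▸ hordR))
  refine ⟨hdeg, hd, ?_⟩
  have hlead := hleadL.symm.trans (hode_f ▸ hleadR)
  rw [hd, hdeg, neg_one_smul] at hlead
  rw [← hd, ← leadingCoeff_eq]
  exact eq_neg_inv_of_pow_mul_neg_eq
    (leadingCoeff_ne_zero.2 (ne_zero_of_order_ne_zero hord.ne)) hlead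

/-- Let `p ∈ ℂ[s]` be nonzero of degree `N_p` with leading coefficient
`p_{N_p}`, with `p, s^{N_q}` coprime (`N_q = 0` or `p(0) ≠ 0`), and let
`S ∈ Mₙ(ℂ)((x))` be invertible with pairwise commuting coefficients and
`S^{N_q}·(dS/dx) = p(S)`.  If there is a nonzero `f ∈ ℂ((x))` of negative order such
that every coefficient of `S − f·1ₙ` is nilpotent, then `N_p = N_q + 2`, the order of
`f` is `−1`, and the leading coefficient of `f` is `−1/p_{N_p}`. -/
theorem stmt_6 (n : ℕ) (hn : 0 < n) (p : Polynomial ℂ) (hp : p ≠ 0) (N_q : ℕ)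
    (hco : N_q = 0 ∨ p.coeff 0 ≠ 0)
    (S : LaurentSeries (Matrix (Fin n) (Fin n) ℂ)) (hU : IsUnit S)
    (hcomm : ∀ i j : ℤ, Commute (S.coeff i) (S.coeff j))
    (hode : S ^ N_q * lsDeriv S = Polynomial.aeval S p)
    (f : LaurentSeries ℂ) (hf : f ≠ 0) (hord : f.order < 0)
    (hnil : ∀ k : ℤ, IsNilpotent (S.coeff k - f.coeff k • (1 : Matrix (Fin n) (Fin n) ℂ))) :
    p.natDegree = N_q + 2 ∧ f.order = -1 ∧ f.coeff (-1) = -(p.leadingCoeff)⁻¹ :=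
  stmt_6_general n hn p N_q S hcomm hode f hord hnil
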